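/- arXiv:2507.03911 — 5 statements merged into one kernel-verified Lean document; each statement's English description precedes it below -/
import Mathlib

section
/- (Time shift) For f ∈ L²(ℝ), window φ, and k ∈ ℝ, the WQPFT of the shifted signal f(·−k) satisfies Q_φ^Λ[f(·−k)](u,ω) = exp(i(ak² + bkω + dk)) · Q_φ^Λ[f̃](u−k, ω), where f̃(y) = exp(2iayk) f(y). -/
open MeasureTheory Complex Real Filter

noncomputable def qK (a b c d e : ℝ) (ω x : ℝ) : ℂ :=
  ((b : ℂ) / (2 * (Real.pi : ℂ) * Complex.I)) ^ (1/2 : ℂ) *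
    Complex.exp (Complex.I * ((a : ℂ) * (x : ℂ) ^ 2 + (b : ℂ) * (x : ℂ) * (ω : ℂ) +
      (c : ℂ) * (ω : ℂ) ^ 2 + (d : ℂ) * (x : ℂ) + (e : ℂ) * (ω : ℂ)))

noncomputable def qKneg (a b c d e : ℝ) (ω x : ℝ) : ℂ :=
  ((b : ℂ) * Complex.I / (2 * (Real.pi : ℂ))) ^ (1/2 : ℂ) *
    Complex.exp (-Complex.I * ((a : ℂ) * (x : ℂ) ^ 2 + (b : ℂ) * (x : ℂ) * (ω : ℂ) +
      (c : ℂ) * (ω : ℂ) ^ 2 + (d : ℂ) * (x : ℂ) + (e : ℂ) * (ω : ℂ)))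

noncomputable def qpft (a b c d e : ℝ) (f : ℝ → ℂ) (ω : ℝ) : ℂ :=
  ∫ x : ℝ, qK a b c d e ω x * f x

noncomputable def wqpft (a b c d e : ℝ) (φ f : ℝ → ℂ) (u ω : ℝ) : ℂ :=
  ∫ x : ℝ, f x * (starRingEnd ℂ) (φ (x - u)) * qK a b c d e ω x

noncomputable def wqpftNeg (a b c d e : ℝ) (φ f : ℝ → ℂ) (u ω : ℝ) : ℂ :=
  ∫ x : ℝ, f x * (starRingEnd ℂ) (φ (x - u)) * qKneg a b c d e ω x


theorem wqpft_time_shift (a b c d e : ℝ) (hb : b ≠ 0)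
    (f φ : ℝ → ℂ) (hf : MemLp f 2 (volume : Measure ℝ))
    (hφ : MemLp φ 2 (volume : Measure ℝ)) (hφ0 : φ ≠ 0)
    (k u ω : ℝ) :
    wqpft a b c d e φ (fun x => f (x - k)) u ω =
      Complex.exp (Complex.I * ((a : ℂ) * (k : ℂ)^2 + (b : ℂ) * (k : ℂ) * (ω : ℂ) + (d : ℂ) * (k : ℂ))) *
        wqpft a b c d e φ (fun y => Complex.exp (2 * Complex.I * (a : ℂ) * (y : ℂ) * (k : ℂ)) * f y) (u - k) ω := by
  unfold wqpft
  rw [← integral_const_mul]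
  rw [show (fun x => f (x - k)) = (fun x => f (x - k)) from rfl]
  calc (∫ x : ℝ, f (x - k) * (starRingEnd ℂ) (φ (x - u)) * qK a b c d e ω x)
      = ∫ y : ℝ, f ((y + k) - k) * (starRingEnd ℂ) (φ ((y + k) - u)) * qK a b c d e ω (y + k) := by
        rw [MeasureTheory.integral_add_right_eq_self
          (fun x => f (x - k) * (starRingEnd ℂ) (φ (x - u)) * qK a b c d e ω x) k]
    _ = _ := by
        apply integral_congr_ae
        filter_upwards with y
        unfold qK
        push_cast
        rw [show ((y:ℝ) + k - k : ℝ) = y by ring, show ((y:ℝ) + k - u : ℝ) = y - (u - k) by ring]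
        push_cast
        have h : Complex.I * ((a:ℂ) * ((y:ℂ) + (k:ℂ)) ^ 2 + (b:ℂ) * ((y:ℂ) + (k:ℂ)) * (ω:ℂ) + (c:ℂ) * (ω:ℂ) ^ 2 + (d:ℂ) * ((y:ℂ) + (k:ℂ)) + (e:ℂ) * (ω:ℂ)) =
            Complex.I * ((a:ℂ) * (k:ℂ) ^ 2 + (b:ℂ) * (k:ℂ) * (ω:ℂ) + (d:ℂ) * (k:ℂ)) + (2 * Complex.I * (a:ℂ) * (y:ℂ) * (k:ℂ) + Complex.I * ((a:ℂ) * (y:ℂ) ^ 2 + (b:ℂ) * (y:ℂ) * (ω:ℂ) + (c:ℂ) * (ω:ℂ) ^ 2 + (d:ℂ) * (y:ℂ) + (e:ℂ) * (ω:ℂ))) := by ring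
        rw [h, Complex.exp_add, Complex.exp_add]
        ring
end

section
/- (Switching signal and window) For f ∈ L²(ℝ) and window φ ∈ L²(ℝ)\{0}, Q_φ^Λ[f](u,ω) = exp(i((a − 4ca²/b²)u² + (b − 4ca/b)uω + (d − 2ae/b)u)) · conj( Q_f^{−Λ}[φ](−u, ω + 2au/b) ). -/
open MeasureTheory Complex Real Filter

theorem conj_pref (b : ℝ) (hb : b ≠ 0) :
    (starRingEnd ℂ) (((b : ℂ) * Complex.I / (2 * (Real.pi : ℂ))) ^ (1/2 : ℂ)) =
    ((b : ℂ) / (2 * (Real.pi : ℂ) * Complex.I)) ^ (1/2 : ℂ) := by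
  have hx : ((b : ℂ) * Complex.I / (2 * (Real.pi : ℂ))).arg ≠ Real.pi := by
    intro h
    rw [Complex.arg_eq_pi_iff] at h
    have him : ((b : ℂ) * Complex.I / (2 * (Real.pi : ℂ))).im = b / (2 * Real.pi) := by
      simp [Complex.div_im]
      rw [div_eq_div_iff (by positivity) (by positivity)]
      ring
    rw [him] at h
    exact hb (by field_simp at h; simpa using h.2)
  have h1 : (starRingEnd ℂ) ((b : ℂ) * Complex.I / (2 * (Real.pi : ℂ)))
      = (b : ℂ) / (2 * (Real.pi : ℂ) * Complex.I) := by
    rw [map_div₀]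
    simp only [map_mul, Complex.conj_ofReal, Complex.conj_I, map_ofNat]
    rw [div_eq_div_iff (by simp [Real.pi_ne_zero]) (by simp [Real.pi_ne_zero, Complex.I_ne_zero])]
    ring_nf
    rw [Complex.I_sq]
    ring
  rw [← h1, Complex.conj_cpow _ _ hx]
  congr 2
  rw [map_div₀, map_one, map_ofNat]

theorem kernel_switch (a b c d e : ℝ) (hb : b ≠ 0) (u ω x : ℝ) :
    qK a b c d e ω x =
      Complex.exp (Complex.I *
          (((a : ℂ) - 4 * (c : ℂ) * (a : ℂ)^2 / (b : ℂ)^2) * (u : ℂ)^2 +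
            ((b : ℂ) - 4 * (c : ℂ) * (a : ℂ) / (b : ℂ)) * (u : ℂ) * (ω : ℂ) +
            ((d : ℂ) - 2 * (a : ℂ) * (e : ℂ) / (b : ℂ)) * (u : ℂ))) *
      (starRingEnd ℂ) (qKneg a b c d e (ω + 2 * a * u / b) (x - u)) := by
  unfold qK qKneg
  rw [map_mul, conj_pref b hb, ← Complex.exp_conj]
  simp only [map_mul, map_add, map_neg, map_pow, Complex.conj_ofReal, Complex.conj_I]
  rw [neg_neg]
  have hb' : (b : ℂ) ≠ 0 := by exact_mod_cast hb
  rw [mul_left_comm, ← Complex.exp_add]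
  congr 2
  push_cast
  ring_nf
  field_simp
  ring

theorem wqpft_switching (a b c d e : ℝ) (hb : b ≠ 0)
    (f φ : ℝ → ℂ) (hf : MemLp f 2 (volume : Measure ℝ))
    (hφ : MemLp φ 2 (volume : Measure ℝ)) (hφ0 : φ ≠ 0)
    (u ω : ℝ) :
    wqpft a b c d e φ f u ω =
      Complex.exp (Complex.I *
          (((a : ℂ) - 4 * (c : ℂ) * (a : ℂ)^2 / (b : ℂ)^2) * (u : ℂ)^2 +
            ((b : ℂ) - 4 * (c : ℂ) * (a : ℂ) / (b : ℂ)) * (u : ℂ) * (ω : ℂ) +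
            ((d : ℂ) - 2 * (a : ℂ) * (e : ℂ) / (b : ℂ)) * (u : ℂ))) *
        (starRingEnd ℂ) (wqpftNeg a b c d e f φ (-u) (ω + 2 * a * u / b)) := by
  set E := Complex.exp (Complex.I *
          (((a : ℂ) - 4 * (c : ℂ) * (a : ℂ)^2 / (b : ℂ)^2) * (u : ℂ)^2 +
            ((b : ℂ) - 4 * (c : ℂ) * (a : ℂ) / (b : ℂ)) * (u : ℂ) * (ω : ℂ) +
            ((d : ℂ) - 2 * (a : ℂ) * (e : ℂ) / (b : ℂ)) * (u : ℂ))) with hE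
  set ω' := ω + 2 * a * u / b with hω'
  unfold wqpft wqpftNeg
  rw [← integral_conj, ← MeasureTheory.integral_const_mul]
  rw [← integral_sub_right_eq_self
    (fun t : ℝ => E * (starRingEnd ℂ) (φ t * (starRingEnd ℂ) (f (t - -u)) * qKneg a b c d e ω' t)) u]
  refine integral_congr_ae (Filter.Eventually.of_forall fun x => ?_)
  simp only
  have hx : x - u - -u = x := by ring
  rw [hx]
  simp only [map_mul, Complex.conj_conj]
  rw [kernel_switch a b c d e hb u ω x]
  ring
end

section
/- (Time marginal) Let φ ∈ L¹(ℝ) ∩ L²(ℝ), φ ≠ 0, and f ∈ L¹(ℝ) ∩ L²(ℝ). Then ∫_ℝ Q_φ^Λ[f](u,ω) du = C · (Q_Λ f)(ω), where C = ∫_ℝ conj(φ(ξ)) dξ. -/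
open MeasureTheory Complex Real Filter

lemma norm_qK (a b c d e ω x : ℝ) :
    ‖qK a b c d e ω x‖ = ‖((b : ℂ) / (2 * (Real.pi : ℂ) * Complex.I)) ^ (1/2 : ℂ)‖ := by
  unfold qK
  rw [norm_mul, Complex.norm_exp]
  have : (Complex.I * ((a : ℂ) * (x : ℂ) ^ 2 + (b : ℂ) * (x : ℂ) * (ω : ℂ) +
      (c : ℂ) * (ω : ℂ) ^ 2 + (d : ℂ) * (x : ℂ) + (e : ℂ) * (ω : ℂ))).re = 0 := by
    simp [Complex.mul_re, Complex.mul_im, pow_two]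
  rw [this, Real.exp_zero, mul_one]

lemma cont_qK (a b c d e ω : ℝ) : Continuous (qK a b c d e ω) := by
  unfold qK; fun_prop

theorem wqpft_time_marginal (a b c d e : ℝ) (hb : b ≠ 0)
    (f φ : ℝ → ℂ)
    (hf1 : Integrable f (volume : Measure ℝ)) (hf2 : MemLp f 2 (volume : Measure ℝ))
    (hφ1 : Integrable φ (volume : Measure ℝ)) (hφ2 : MemLp φ 2 (volume : Measure ℝ))
    (hφ0 : φ ≠ 0) (ω : ℝ) :
    ∫ u : ℝ, wqpft a b c d e φ f u ω =
      (∫ ξ : ℝ, (starRingEnd ℂ) (φ ξ)) * qpft a b c d e f ω := by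
  set K : ℝ → ℂ := qK a b c d e ω with hK
  set C0 : ℝ := ‖((b : ℂ) / (2 * (Real.pi : ℂ) * Complex.I)) ^ (1/2 : ℂ)‖ with hC0
  have hnorm : ∀ x, ‖K x‖ = C0 := fun x => norm_qK a b c d e ω x
  have hφc : Integrable (fun x => (starRingEnd ℂ) (φ x)) volume := by
    refine ⟨Continuous.comp_aestronglyMeasurable continuous_star hφ1.1, ?_⟩
    simpa [HasFiniteIntegral, nnnorm_star] using hφ1.2
  have hfK : Integrable (fun x => f x * K x) volume :=
    (Integrable.bdd_mul hf1 ((cont_qK a b c d e ω).aestronglyMeasurable)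
      (Filter.Eventually.of_forall fun x => (hnorm x).le)).congr
      (Filter.Eventually.of_forall fun x => mul_comm (K x) (f x))
  set F : ℝ × ℝ → ℂ := fun p => f p.2 * (starRingEnd ℂ) (φ (p.2 - p.1)) * K p.2 with hF
  have hmeas : AEStronglyMeasurable F (volume.prod volume) := by
    have h1 : AEStronglyMeasurable (fun p : ℝ × ℝ => f p.2) (volume.prod volume) :=
      (hf1.aestronglyMeasurable.comp_quasiMeasurePreserving
        Measure.quasiMeasurePreserving_snd)
    have h2 : AEStronglyMeasurable (fun p : ℝ × ℝ => (starRingEnd ℂ) (φ (p.2 - p.1)))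
        (volume.prod volume) := by
      have hm0 : MeasurePreserving (fun p : ℝ × ℝ => (p.2 - p.1, p.1))
          (volume.prod volume) (volume.prod volume) :=
        (measurePreserving_sub_prod (volume : Measure ℝ) volume).comp
          Measure.measurePreserving_swap
      exact hφc.aestronglyMeasurable.comp_quasiMeasurePreserving
        (Measure.quasiMeasurePreserving_fst.comp hm0.quasiMeasurePreserving)
    have h3 : AEStronglyMeasurable (fun p : ℝ × ℝ => K p.2) (volume.prod volume) :=
      ((cont_qK a b c d e ω).comp continuous_snd).aestronglyMeasurable
    exact (h1.mul h2).mul h3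
  have hFint : Integrable F (volume.prod volume) := by
    rw [integrable_prod_iff' hmeas]
    constructor
    · refine Filter.Eventually.of_forall fun x => ?_
      have : Integrable (fun u => (starRingEnd ℂ) (φ (x - u))) volume := by
        exact (integrable_comp_sub_left (fun t => (starRingEnd ℂ) (φ t)) x).mpr hφc
      simpa [hF, mul_comm, mul_assoc, mul_left_comm] using
        (this.const_mul (f x * K x)).congr
          (Filter.Eventually.of_forall fun u => by ring)
    · have : (fun x : ℝ => ∫ u : ℝ, ‖F (u, x)‖) =
          fun x => ‖f x‖ * C0 * ∫ u : ℝ, ‖φ u‖ := by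
        funext x
        have : ∀ u : ℝ, ‖F (u, x)‖ = ‖f x‖ * C0 * ‖φ (x - u)‖ := by
          intro u
          simp only [hF, norm_mul, hnorm, RCLike.norm_conj]
          ring
        rw [integral_congr_ae (Filter.Eventually.of_forall this)]
        rw [integral_const_mul]
        congr 1
        exact integral_sub_left_eq_self (fun u => ‖φ u‖) volume x
      rw [this]
      exact (hf1.norm.mul_const C0).mul_const _
  have hswap : ∫ u : ℝ, wqpft a b c d e φ f u ω =
      ∫ x : ℝ, ∫ u : ℝ, f x * (starRingEnd ℂ) (φ (x - u)) * K x := by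
    unfold wqpft
    exact integral_integral_swap hFint
  rw [hswap]
  have hinner : ∀ x : ℝ, (∫ u : ℝ, f x * (starRingEnd ℂ) (φ (x - u)) * K x) =
      (∫ ξ : ℝ, (starRingEnd ℂ) (φ ξ)) * (f x * K x) := by
    intro x
    rw [show (fun u : ℝ => f x * (starRingEnd ℂ) (φ (x - u)) * K x) =
        fun u : ℝ => (f x * K x) * (starRingEnd ℂ) (φ (x - u)) from funext fun u => by ring]
    rw [integral_const_mul]
    rw [integral_sub_left_eq_self (fun ξ => (starRingEnd ℂ) (φ ξ)) volume x]
    ring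
  rw [integral_congr_ae (Filter.Eventually.of_forall hinner)]
  rw [integral_const_mul]
  unfold qpft
  congr 1
  exact integral_congr_ae (Filter.Eventually.of_forall fun x => mul_comm _ _)
end

section
/- (WQPFT as QPFT convolution) For suitable f and window φ, Q_φ^Λ[f](u,ω) = (f_ω ⊗_a φ_u)(u), where the QPFT convolution is (g ⊗_a h)(x) = √(b/(2πi)) e^{−iax²} ∫_ℝ g(τ) e^{iaτ²} h(x−τ) e^{ia(x−τ)²} dτ, f_ω(x) = f(x) exp(i(bxω + cω² + eω)), and φ_u(u−x) = conj(φ(−(u−x))) exp(i(dx − ax² + 2aux)). -/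
open MeasureTheory Complex Real Filter

noncomputable def qconv (a b : ℝ) (g h : ℝ → ℂ) (x : ℝ) : ℂ :=
  ((b : ℂ) / (2 * (Real.pi : ℂ) * Complex.I)) ^ (1/2 : ℂ) *
    Complex.exp (-Complex.I * (a : ℂ) * (x : ℂ)^2) *
      ∫ τ : ℝ, g τ * Complex.exp (Complex.I * (a : ℂ) * (τ : ℂ)^2) * h (x - τ) *
        Complex.exp (Complex.I * (a : ℂ) * ((x : ℂ) - (τ : ℂ))^2)

theorem wqpft_as_qpft_convolution (a b c d e : ℝ) (hb : b ≠ 0)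
    (p q : ℝ) (hp : 1 ≤ p) (hq : 1 ≤ q) (hpq : 1/p + 1/q = 1)
    (f φ : ℝ → ℂ) (hf : MemLp f (ENNReal.ofReal p) (volume : Measure ℝ))
    (hφ : MemLp φ (ENNReal.ofReal q) (volume : Measure ℝ)) (hφ0 : φ ≠ 0)
    (u ω : ℝ) :
    wqpft a b c d e φ f u ω =
      qconv a b
        (fun x => f x * Complex.exp (Complex.I *
          ((b : ℂ) * (x : ℂ) * (ω : ℂ) + (c : ℂ) * (ω : ℂ)^2 + (e : ℂ) * (ω : ℂ))))
        (fun y => (starRingEnd ℂ) (φ (-y)) * Complex.exp (Complex.I *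
          ((d : ℂ) * ((u : ℂ) - (y : ℂ)) - (a : ℂ) * ((u : ℂ) - (y : ℂ))^2 +
            2 * (a : ℂ) * (u : ℂ) * ((u : ℂ) - (y : ℂ)))))
        u := by
  unfold wqpft qconv qK
  rw [mul_assoc, ← integral_const_mul]
  refine integral_congr_ae (Filter.Eventually.of_forall fun τ => ?_)
  simp only [neg_sub, sub_sub_cancel]
  push_cast
  ring_nf
  simp only [Complex.exp_add, Complex.exp_sub, Complex.exp_neg]
  field_simp
end

section
/- (QPFT convolution theorem) For f, g ∈ L¹(ℝ), the QPFT of the convolution (f ⊗_a g)(x) = √(b/(2πi)) e^{−iax²} ∫_ℝ f(τ) e^{iaτ²} g(x−τ) e^{ia(x−τ)²} dτ satisfies (Q_Λ (f ⊗_a g))(ω) = exp(−i(cω² + eω)) · (Q_Λ f)(ω) · (Q_Λ g)(ω). -/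
open MeasureTheory Complex Real Filter

open scoped Convolution

noncomputable def Ee (a b d ω : ℝ) (t : ℝ) : ℂ :=
  Complex.exp (Complex.I * ((a : ℂ) * (t : ℂ) ^ 2 + (b : ℂ) * (t : ℂ) * (ω : ℂ) + (d : ℂ) * (t : ℂ)))

lemma norm_Ee (a b d ω t : ℝ) : ‖Ee a b d ω t‖ = 1 := by
  have h : Complex.I * ((a : ℂ) * (t : ℂ) ^ 2 + (b : ℂ) * (t : ℂ) * (ω : ℂ) + (d : ℂ) * (t : ℂ))
      = ((a * t ^ 2 + b * t * ω + d * t : ℝ) : ℂ) * Complex.I := by push_cast; ring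
  rw [Ee, h, Complex.norm_exp_ofReal_mul_I]

lemma integrable_mul_Ee {f : ℝ → ℂ} (hf : Integrable f (volume : Measure ℝ)) (a b d ω : ℝ) :
    Integrable (fun t => f t * Ee a b d ω t) (volume : Measure ℝ) := by
  have : Integrable (fun t => Ee a b d ω t * f t) (volume : Measure ℝ) := by
    refine hf.bdd_mul (c := 1) ?_ (Filter.Eventually.of_forall fun t => le_of_eq (norm_Ee a b d ω t))
    exact (Complex.continuous_exp.comp (by continuity)).aestronglyMeasurable
  simpa [mul_comm] using this


lemma qpft_eq (a b c d e : ℝ) (f : ℝ → ℂ) (ω : ℝ) :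
    qpft a b c d e f ω =
      ((b : ℂ) / (2 * (Real.pi : ℂ) * Complex.I)) ^ (1/2 : ℂ) *
        Complex.exp (Complex.I * ((c : ℂ) * (ω : ℂ)^2 + (e : ℂ) * (ω : ℂ))) *
          ∫ t : ℝ, f t * Ee a b d ω t := by
  rw [qpft, ← integral_const_mul]
  refine integral_congr_ae (Filter.Eventually.of_forall fun x => ?_)
  simp only [qK, Ee]
  have h : Complex.I * ((a : ℂ) * (x : ℂ) ^ 2 + (b : ℂ) * (x : ℂ) * (ω : ℂ) +
      (c : ℂ) * (ω : ℂ) ^ 2 + (d : ℂ) * (x : ℂ) + (e : ℂ) * (ω : ℂ)) =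
      Complex.I * ((c : ℂ) * (ω : ℂ)^2 + (e : ℂ) * (ω : ℂ)) +
      Complex.I * ((a : ℂ) * (x : ℂ) ^ 2 + (b : ℂ) * (x : ℂ) * (ω : ℂ) + (d : ℂ) * (x : ℂ)) := by
    ring
  rw [h, Complex.exp_add]; ring

theorem qpft_convolution_theorem (a b c d e : ℝ) (hb : b ≠ 0)
    (f g : ℝ → ℂ) (hf : Integrable f (volume : Measure ℝ))
    (hg : Integrable g (volume : Measure ℝ)) (ω : ℝ) :
    qpft a b c d e (qconv a b f g) ω =
      Complex.exp (-Complex.I * ((c : ℂ) * (ω : ℂ)^2 + (e : ℂ) * (ω : ℂ))) *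
        qpft a b c d e f ω * qpft a b c d e g ω := by
  set C : ℂ := ((b : ℂ) / (2 * (Real.pi : ℂ) * Complex.I)) ^ (1/2 : ℂ) with hC
  set F1 : ℝ → ℂ := fun t => f t * Ee a b d ω t with hF1
  set G1 : ℝ → ℂ := fun t => g t * Ee a b d ω t with hG1
  have hF1i : Integrable F1 (volume : Measure ℝ) := integrable_mul_Ee hf a b d ω
  have hG1i : Integrable G1 (volume : Measure ℝ) := integrable_mul_Ee hg a b d ω
  set L : ℂ →L[ℝ] ℂ →L[ℝ] ℂ := ContinuousLinearMap.mul ℝ ℂ with hL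
  -- pointwise identity
  have hpt : ∀ x : ℝ, qK a b c d e ω x * qconv a b f g x =
      (C * C * Complex.exp (Complex.I * ((c : ℂ) * (ω : ℂ)^2 + (e : ℂ) * (ω : ℂ)))) *
        (F1 ⋆[L, (volume : Measure ℝ)] G1) x := by
    intro x
    rw [convolution_def]
    simp only [hL, ContinuousLinearMap.mul_apply']
    rw [qK, qconv, ← hC]
    rw [show C * Complex.exp (Complex.I * ((a : ℂ) * (x : ℂ) ^ 2 + (b : ℂ) * (x : ℂ) * (ω : ℂ) +
        (c : ℂ) * (ω : ℂ) ^ 2 + (d : ℂ) * (x : ℂ) + (e : ℂ) * (ω : ℂ))) *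
        (C * Complex.exp (-Complex.I * (a : ℂ) * (x : ℂ)^2) *
        ∫ τ : ℝ, f τ * Complex.exp (Complex.I * (a : ℂ) * (τ : ℂ)^2) * g (x - τ) *
          Complex.exp (Complex.I * (a : ℂ) * ((x : ℂ) - (τ : ℂ))^2)) =
        (C * C * Complex.exp (Complex.I * ((a : ℂ) * (x : ℂ) ^ 2 + (b : ℂ) * (x : ℂ) * (ω : ℂ) +
        (c : ℂ) * (ω : ℂ) ^ 2 + (d : ℂ) * (x : ℂ) + (e : ℂ) * (ω : ℂ))) *
        Complex.exp (-Complex.I * (a : ℂ) * (x : ℂ)^2)) *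
        ∫ τ : ℝ, f τ * Complex.exp (Complex.I * (a : ℂ) * (τ : ℂ)^2) * g (x - τ) *
          Complex.exp (Complex.I * (a : ℂ) * ((x : ℂ) - (τ : ℂ))^2) from by ring]
    rw [← integral_const_mul, ← integral_const_mul]
    refine integral_congr_ae (Filter.Eventually.of_forall fun τ => ?_)
    simp only [hF1, hG1, Ee]
    have hE : Complex.exp (Complex.I * ((a : ℂ) * (x : ℂ) ^ 2 + (b : ℂ) * (x : ℂ) * (ω : ℂ) +
          (c : ℂ) * (ω : ℂ) ^ 2 + (d : ℂ) * (x : ℂ) + (e : ℂ) * (ω : ℂ))) *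
        Complex.exp (-Complex.I * (a : ℂ) * (x : ℂ)^2) *
        Complex.exp (Complex.I * (a : ℂ) * (τ : ℂ)^2) *
        Complex.exp (Complex.I * (a : ℂ) * ((x : ℂ) - (τ : ℂ))^2) =
        Complex.exp (Complex.I * ((c : ℂ) * (ω : ℂ)^2 + (e : ℂ) * (ω : ℂ))) *
        Complex.exp (Complex.I * ((a : ℂ) * (τ : ℂ) ^ 2 + (b : ℂ) * (τ : ℂ) * (ω : ℂ) + (d : ℂ) * (τ : ℂ))) *
        Complex.exp (Complex.I * ((a : ℂ) * ((x - τ : ℝ) : ℂ) ^ 2 + (b : ℂ) * ((x - τ : ℝ) : ℂ) * (ω : ℂ) +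
          (d : ℂ) * ((x - τ : ℝ) : ℂ))) := by
      simp only [← Complex.exp_add]
      congr 1
      push_cast
      ring
    linear_combination (C * C * f τ * g (x - τ)) * hE
  rw [qpft]
  calc (∫ x : ℝ, qK a b c d e ω x * qconv a b f g x)
      = ∫ x : ℝ, (C * C * Complex.exp (Complex.I * ((c : ℂ) * (ω : ℂ)^2 + (e : ℂ) * (ω : ℂ)))) *
          (F1 ⋆[L, (volume : Measure ℝ)] G1) x :=
        integral_congr_ae (Filter.Eventually.of_forall hpt)
    _ = (C * C * Complex.exp (Complex.I * ((c : ℂ) * (ω : ℂ)^2 + (e : ℂ) * (ω : ℂ)))) *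
          ((∫ t : ℝ, F1 t) * (∫ t : ℝ, G1 t)) := by
        rw [integral_const_mul, MeasureTheory.integral_convolution L hF1i hG1i]
        simp [hL, ContinuousLinearMap.mul_apply']
    _ = Complex.exp (-Complex.I * ((c : ℂ) * (ω : ℂ)^2 + (e : ℂ) * (ω : ℂ))) *
          qpft a b c d e f ω * qpft a b c d e g ω := by
        rw [qpft_eq a b c d e f ω, qpft_eq a b c d e g ω, ← hC, ← hF1, ← hG1]
        have hE : Complex.exp (-Complex.I * ((c : ℂ) * (ω : ℂ)^2 + (e : ℂ) * (ω : ℂ))) *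
            Complex.exp (Complex.I * ((c : ℂ) * (ω : ℂ)^2 + (e : ℂ) * (ω : ℂ))) *
            Complex.exp (Complex.I * ((c : ℂ) * (ω : ℂ)^2 + (e : ℂ) * (ω : ℂ))) =
            Complex.exp (Complex.I * ((c : ℂ) * (ω : ℂ)^2 + (e : ℂ) * (ω : ℂ))) := by
          simp only [← Complex.exp_add]
          congr 1
          ring
        linear_combination (-(C * C * (∫ t : ℝ, F1 t) * (∫ t : ℝ, G1 t))) * hE
end
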